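/- If (v,x) ∈ O_{(α;β)} is distinguished, then either (1) α = ∅ and β = (n), or (2) writing α = (α_1,…,α_k) and β = (β_1,…,β_k) (padding β with zeros to length k = ℓ(α)), one has α_1 > α_2 > … > α_k > 0 and β_1 > β_2 > … > β_k ≥ 0. -/

import Mathlib

/-!
If two rows `r ≠ s` of the normal basis satisfy `α s ≤ α r` and `β r ≤ β s`, the shear
`b ⟨r, j⟩ ↦ b ⟨r, j⟩ + b ⟨s, j - (α r - α s)⟩` is a new normal basis for `x`, made of homogeneous
vectors, in which `v` has no component along row `s`; so row `s` splits off as a graded `x`-stable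
summand. With the original basis the same happens when `α s = 0` and there is a second row.
A bipartition avoiding both configurations is of one of the two listed types.
-/

open Submodule Module

section

variable {R V : Type*} [CommRing R] [AddCommGroup V] [Module R V]

/-- `W d` is the degree-`d` piece of the grading; a submodule is graded iff it is the sum of its
intersections with the `W d`. -/
def IsDistinguished (x : Module.End R V) (W : ℤ → Submodule R V) (v : V) : Prop :=
  ∀ V₁ V₂ : Submodule R V, IsCompl V₁ V₂ → (∀ w ∈ V₁, x w ∈ V₁) → (∀ w ∈ V₂, x w ∈ V₂) →
    V₁ = ⨆ d, V₁ ⊓ W d → V₂ = ⨆ d, V₂ ⊓ W d → v ∈ V₁ → V₁ = ⊥ ∨ V₂ = ⊥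

lemma span_eq_iSup_inf_of_forall_exists_mem {κ : Type*} {S : Set V} {W : κ → Submodule R V}
    (hS : ∀ w ∈ S, ∃ d, w ∈ W d) : span R S = ⨆ d, span R S ⊓ W d := by
  refine le_antisymm (span_le.2 fun w hw => ?_) (iSup_le fun _ => inf_le_left)
  obtain ⟨d, hd⟩ := hS w hw
  exact mem_iSup_of_mem d ⟨subset_span hw, hd⟩

lemma IsDistinguished.eq_empty_or_eq_empty_of_isCompl [Nontrivial R] {x : Module.End R V}
    {W : ℤ → Submodule R V} {v : V} (hd : IsDistinguished x W v) {κ : Type*} (e : Basis κ R V)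
    (hW : ∀ p, ∃ d, e p ∈ W d) {S T : Set κ} (hST : IsCompl S T)
    (hS : ∀ w ∈ span R (e '' S), x w ∈ span R (e '' S))
    (hT : ∀ w ∈ span R (e '' T), x w ∈ span R (e '' T)) (hv : v ∈ span R (e '' S)) :
    S = ∅ ∨ T = ∅ := by
  have graded (U : Set κ) := span_eq_iSup_inf_of_forall_exists_mem (S := e '' U) (W := W)
    (by rintro _ ⟨p, -, rfl⟩; exact hW p)
  refine (hd _ _ (e.linearIndependent.isCompl_span_image e.span_eq hST) hS hT
    (graded S) (graded T) hv).imp ?_ ?_ <;>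
  · intro h
    rw [span_eq_bot] at h
    exact Set.eq_empty_of_forall_notMem fun p hp => e.ne_zero p (h _ ⟨p, hp, rfl⟩)

def basisGrading {κ : Type*} (b : Basis κ R V) (deg : κ → ℤ) (d : ℤ) : Submodule R V :=
  span R {w | ∃ p, w = b p ∧ deg p = d}

lemma basis_mem_basisGrading {κ : Type*} (b : Basis κ R V) (deg : κ → ℤ) (p : κ) :
    b p ∈ basisGrading b deg (deg p) :=
  subset_span ⟨p, rfl, rfl⟩

section Rows

variable {ι : Type*} {n : ι → ℕ}

/-- Columns are 0-based: `p = ⟨i, j - 1⟩` is the paper's `v_{i,j}`, of degree `α i - j`. -/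
def rowDegree (α : ι → ℕ) (p : Σ i : ι, Fin (n i)) : ℤ := α p.1 - ((p.2 : ℕ) + 1)

def IsJordanBasis (x : Module.End R V) (e : Basis (Σ i : ι, Fin (n i)) R V) : Prop :=
  ∀ p : Σ i : ι, Fin (n i), x (e p) =
    if _ : (p.2 : ℕ) = 0 then 0
    else e ⟨p.1, ⟨(p.2 : ℕ) - 1, lt_of_le_of_lt (Nat.sub_le _ _) p.2.2⟩⟩

variable {x : Module.End R V} {e : Basis (Σ i : ι, Fin (n i)) R V}

lemma IsJordanBasis.map (he : IsJordanBasis x e) (g : V ≃ₗ[R] V)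
    (hg : Commute x (g : Module.End R V)) : IsJordanBasis x (e.map g) := by
  intro p
  have hxg : x (g (e p)) = g (x (e p)) := LinearMap.congr_fun hg.eq (e p)
  rw [Basis.map_apply, hxg, he p]
  split_ifs <;> simp

lemma IsJordanBasis.mapsTo_span_rows (he : IsJordanBasis x e) (rows : Set ι) :
    ∀ w ∈ span R (e '' (Sigma.fst ⁻¹' rows)), x w ∈ span R (e '' (Sigma.fst ⁻¹' rows)) := by
  refine fun w hw => (span_le (p := (span R _).comap x)).2 ?_ hw
  rintro _ ⟨p, hp, rfl⟩
  rw [SetLike.mem_coe, mem_comap, he p]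
  split_ifs
  · exact zero_mem _
  · exact subset_span (Set.mem_image_of_mem e hp)

lemma IsJordanBasis.not_isDistinguished [Nontrivial R] (he : IsJordanBasis x e)
    (hrow : ∀ i, 0 < n i) {W : ℤ → Submodule R V} (hW : ∀ p, ∃ d, e p ∈ W d) {r s : ι}
    (hrs : r ≠ s) {v : V} (hv : v ∈ span R (e '' (Sigma.fst ⁻¹' {s}ᶜ))) :
    ¬ IsDistinguished x W v := by
  intro hd
  rcases hd.eq_empty_or_eq_empty_of_isCompl e hW ((isCompl_compl.preimage Sigma.fst).symm)
    (he.mapsTo_span_rows _) (he.mapsTo_span_rows {s}) hv with h | h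
  · exact h.subset (show (⟨r, ⟨0, hrow r⟩⟩ : Σ i : ι, Fin (n i)) ∈ Sigma.fst ⁻¹' {s}ᶜ from hrs)
  · exact h.subset (show (⟨s, ⟨0, hrow s⟩⟩ : Σ i : ι, Fin (n i)) ∈ Sigma.fst ⁻¹' {s} from rfl)

end Rows

section RowShift

variable {ι : Type*} [DecidableEq ι] {n : ι → ℕ} (b : Basis (Σ i : ι, Fin (n i)) R V)

noncomputable def rowShift (r s : ι) (d : ℕ) : Module.End R V :=
  b.constr R fun p =>
    if h : p.1 = r ∧ d ≤ (p.2 : ℕ) ∧ (p.2 : ℕ) - d < n s then b ⟨s, ⟨p.2 - d, h.2.2⟩⟩ else 0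

lemma rowShift_basis (r s : ι) (d : ℕ) (p : Σ i : ι, Fin (n i)) :
    rowShift b r s d (b p) =
      if h : p.1 = r ∧ d ≤ (p.2 : ℕ) ∧ (p.2 : ℕ) - d < n s then b ⟨s, ⟨p.2 - d, h.2.2⟩⟩ else 0 :=
  b.constr_basis R _ p

lemma rowShift_basis_of_ne (r s : ι) (d : ℕ) {p : Σ i : ι, Fin (n i)} (hp : p.1 ≠ r) :
    rowShift b r s d (b p) = 0 := by
  rw [rowShift_basis, dif_neg (fun h => hp h.1)]

lemma rowShift_mul_self {r s : ι} (hrs : r ≠ s) (d : ℕ) :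
    rowShift b r s d * rowShift b r s d = 0 :=
  b.ext fun p => by
    rw [Module.End.mul_apply, rowShift_basis]
    split_ifs
    · exact rowShift_basis_of_ne b r s d hrs.symm
    · exact map_zero _

lemma commute_rowShift {x : Module.End R V} (hb : IsJordanBasis x b) {r s : ι} {d : ℕ}
    (hlen : n r ≤ d + n s) : Commute x (rowShift b r s d) := by
  refine b.ext fun ⟨i, j⟩ => ?_
  rw [Module.End.mul_apply, Module.End.mul_apply, hb]
  dsimp only
  by_cases hir : i = r
  swap
  · rw [rowShift_basis_of_ne b r s d hir]
    split_ifs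
    · simp
    · rw [rowShift_basis_of_ne b r s d hir, map_zero]
  subst hir
  rw [rowShift_basis]
  dsimp only
  have hj := j.2
  by_cases hdj : d ≤ (j : ℕ)
  · rw [dif_pos ⟨rfl, hdj, by omega⟩, hb]
    dsimp only
    by_cases hjd : (j : ℕ) = d
    · rw [dif_pos (by omega)]
      split_ifs with hj0
      · exact (map_zero _).symm
      · rw [rowShift_basis, dif_neg (by dsimp only; omega)]
    · rw [dif_neg (by omega), dif_neg (by omega), rowShift_basis,
        dif_pos ⟨rfl, by dsimp only; omega, by dsimp only; omega⟩]
      congr 3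
      dsimp only
      omega
  · rw [dif_neg (by omega), map_zero]
    split_ifs
    · exact (map_zero _).symm
    · rw [rowShift_basis, dif_neg (by dsimp only; omega)]

lemma rowShift_basis_mem_basisGrading {α : ι → ℕ} {r s : ι} {d : ℕ} (hα : α r = α s + d)
    (p : Σ i : ι, Fin (n i)) :
    rowShift b r s d (b p) ∈ basisGrading b (rowDegree α) (rowDegree α p) := by
  rw [rowShift_basis]
  split_ifs with h
  · obtain ⟨hpr, hdp, -⟩ := h
    refine subset_span ⟨_, rfl, ?_⟩
    simp only [rowDegree, hpr, hα]
    omega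
  · exact zero_mem _

noncomputable def shearBasis {r s : ι} (hrs : r ≠ s) (d : ℕ) : Basis (Σ i : ι, Fin (n i)) R V :=
  b.map (LinearMap.GeneralLinearGroup.toLinearEquiv
    (IsNilpotent.isUnit_one_add ⟨2, by rw [pow_two, rowShift_mul_self b hrs d]⟩).unit)

variable {r s : ι} (hrs : r ≠ s) (d : ℕ)

lemma coe_shearBasis : ⇑(shearBasis b hrs d) = ⇑(1 + rowShift b r s d) ∘ ⇑b := rfl

lemma IsJordanBasis.shearBasis {x : Module.End R V} (hb : IsJordanBasis x b)
    (hlen : n r ≤ d + n s) : IsJordanBasis x (shearBasis b hrs d) :=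
  hb.map _ ((Commute.one_right x).add_right (commute_rowShift b hb hlen))

lemma apply_mem_span_shearBasis_image {S : Set (Σ i : ι, Fin (n i))} {w : V}
    (hw : w ∈ span R (b '' S)) :
    (1 + rowShift b r s d) w ∈ span R (shearBasis b hrs d '' S) := by
  rw [coe_shearBasis, Set.image_comp]
  exact apply_mem_span_image_of_mem_span _ hw

lemma shearBasis_mem_basisGrading {α : ι → ℕ} (hα : α r = α s + d)
    (p : Σ i : ι, Fin (n i)) :
    shearBasis b hrs d p ∈ basisGrading b (rowDegree α) (rowDegree α p) :=
  add_mem (basis_mem_basisGrading b _ p) (rowShift_basis_mem_basisGrading b hα p)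

end RowShift

section AlphaVec

variable {ι : Type*} {α β : ι → ℕ} (b : Basis (Σ i : ι, Fin (α i + β i)) R V)

/-- The paper's `v_{i,α_i}`, the component of `v` in row `i` (zero when `α i = 0`). -/
noncomputable def alphaVec (i : ι) : V :=
  if h : 0 < α i then b ⟨i, ⟨α i - 1, by omega⟩⟩ else 0

lemma rowShift_alphaVec [DecidableEq ι] {r s : ι} {d : ℕ} (hα : α r = α s + d) (i : ι) :
    rowShift b r s d (alphaVec b i) = if i = r then alphaVec b s else 0 := by
  by_cases hir : i = r
  swap
  · rw [if_neg hir, alphaVec]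
    split_ifs
    · exact rowShift_basis_of_ne b r s d hir
    · exact map_zero _
  subst hir
  rw [if_pos rfl, alphaVec, alphaVec]
  split_ifs with hi hs hs
  · rw [rowShift_basis, dif_pos ⟨rfl, by dsimp only; omega, by dsimp only; omega⟩]
    congr 3
    dsimp only
    omega
  · rw [rowShift_basis, dif_neg (by dsimp only; omega)]
  · omega
  · exact map_zero _

variable [Fintype ι] [DecidableEq ι]

lemma sum_erase_alphaVec_mem_span (s : ι) :
    ∑ i ∈ Finset.univ.erase s, alphaVec b i ∈ span R (b '' (Sigma.fst ⁻¹' {s}ᶜ)) := by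
  refine sum_mem fun i hi => ?_
  unfold alphaVec
  split_ifs
  · exact subset_span ⟨_, Finset.ne_of_mem_erase hi, rfl⟩
  · exact zero_mem _

lemma sum_alphaVec_mem_span_of_alpha_eq_zero {s : ι} (hs : α s = 0) :
    ∑ i, alphaVec b i ∈ span R (b '' (Sigma.fst ⁻¹' {s}ᶜ)) := by
  rw [← Finset.sum_erase_add _ _ (Finset.mem_univ s), alphaVec, dif_neg (by omega), add_zero]
  exact sum_erase_alphaVec_mem_span b s

lemma sum_alphaVec_mem_span_shearBasis {r s : ι} (hrs : r ≠ s) {d : ℕ} (hα : α r = α s + d) :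
    ∑ i, alphaVec b i ∈ span R (shearBasis b hrs d '' (Sigma.fst ⁻¹' {s}ᶜ)) := by
  have h := apply_mem_span_shearBasis_image b hrs d (sum_erase_alphaVec_mem_span b s)
  rwa [LinearMap.add_apply, Module.End.one_apply, map_sum, Finset.sum_congr rfl
    fun i _ => rowShift_alphaVec b hα i, Finset.sum_ite_eq', if_pos (Finset.mem_erase.2
    ⟨hrs, Finset.mem_univ r⟩), Finset.sum_erase_add _ _ (Finset.mem_univ s)] at h

variable [Nontrivial R] {x : Module.End R V} {b}

theorem IsJordanBasis.not_isDistinguished_of_alpha_eq_zero (hb : IsJordanBasis x b)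
    (hrow : ∀ i, 0 < α i + β i) {r s : ι} (hrs : r ≠ s) (hs : α s = 0) :
    ¬ IsDistinguished x (basisGrading b (rowDegree α)) (∑ i, alphaVec b i) :=
  hb.not_isDistinguished hrow (fun p => ⟨_, basis_mem_basisGrading b _ p⟩) hrs
    (sum_alphaVec_mem_span_of_alpha_eq_zero b hs)

theorem IsJordanBasis.not_isDistinguished_of_le (hb : IsJordanBasis x b)
    (hrow : ∀ i, 0 < α i + β i) {r s : ι} (hrs : r ≠ s) (hα : α s ≤ α r) (hβ : β r ≤ β s) :
    ¬ IsDistinguished x (basisGrading b (rowDegree α)) (∑ i, alphaVec b i) := by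
  have hαd : α r = α s + (α r - α s) := by omega
  exact (hb.shearBasis b hrs _ (by omega)).not_isDistinguished hrow
    (fun p => ⟨_, shearBasis_mem_basisGrading b hrs _ hαd p⟩) hrs
    (sum_alphaVec_mem_span_shearBasis b hrs hαd)

end AlphaVec

lemma exists_rows_of_not_classified {k : ℕ} (hk : 0 < k) {α β : ℕ → ℕ} (hα : Antitone α)
    (hβ : Antitone β)
    (h : ¬ ((k = 1 ∧ α 0 = 0) ∨
      ((∀ i, i + 1 < k → α (i + 1) < α i ∧ β (i + 1) < β i) ∧ 0 < α (k - 1)))) :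
    ∃ r s : Fin k, r ≠ s ∧ (α s = 0 ∨ α s ≤ α r ∧ β r ≤ β s) := by
  by_cases hlast : α (k - 1) = 0
  · have hk1 : k ≠ 1 := fun hk1 => h (Or.inl ⟨hk1, by simpa [hk1] using hlast⟩)
    exact ⟨⟨0, hk⟩, ⟨k - 1, by omega⟩, by simp [Fin.ext_iff]; omega, Or.inl hlast⟩
  obtain ⟨i, hi, hstep⟩ : ∃ i, i + 1 < k ∧ ¬ (α (i + 1) < α i ∧ β (i + 1) < β i) := by
    by_contra! hall
    exact h (Or.inr ⟨hall, by omega⟩)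
  have hαi : α (i + 1) ≤ α i := hα (Nat.le_add_right i 1)
  have hβi : β (i + 1) ≤ β i := hβ (Nat.le_add_right i 1)
  by_cases hαeq : α (i + 1) = α i
  · exact ⟨⟨i + 1, hi⟩, ⟨i, by omega⟩, by simp [Fin.ext_iff], Or.inr ⟨hαeq.ge, hβi⟩⟩
  · exact ⟨⟨i, by omega⟩, ⟨i + 1, hi⟩, by simp [Fin.ext_iff], Or.inr ⟨hαi,
      not_lt.1 fun hβlt => hstep ⟨lt_of_le_of_ne hαi hαeq, hβlt⟩⟩⟩
end

/-- Classification of distinguished pairs.  Let `(v,x)` have a normal basis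
`b ⟨i,j⟩` of type the bipartition `(α;β)` (rows `i < k`, all nonempty), with grading
`deg b ⟨i,j⟩ = α i - (j+1)`.  If `(v,x)` is distinguished (no nontrivial decomposition
`V = V₁ ⊕ V₂` with both summands `x`-stable and stable for the grading, and `v ∈ V₁`),
then either (1) `α = ∅` and `β = (n)`, i.e. `k = 1` and `α 0 = 0`; or (2) the parts of
`α` are strictly decreasing and positive and the parts of `β` are strictly decreasing:
`α 0 > α 1 > … > α (k-1) > 0` and `β 0 > β 1 > … > β (k-1) ≥ 0`. -/
theorem distinguished_pairs_classification
    (F : Type) [Field F] (V : Type) [AddCommGroup V] [Module F V]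
    (k : ℕ) (hk : 0 < k) (α β : ℕ → ℕ) (hα : Antitone α) (hβ : Antitone β)
    (hrow : ∀ i : Fin k, 0 < α i + β i)
    (b : Module.Basis (Σ i : Fin k, Fin (α i + β i)) F V)
    (x : Module.End F V)
    (hx : ∀ p : Σ i : Fin k, Fin (α i + β i), x (b p) =
      if _ : (p.2 : ℕ) = 0 then 0
      else b ⟨p.1, ⟨(p.2 : ℕ) - 1, lt_of_le_of_lt (Nat.sub_le _ _) p.2.2⟩⟩)
    (v : V)
    (hv : v = ∑ i : Fin k,
      if h : 0 < α i then b ⟨i, ⟨α i - 1, by omega⟩⟩ else 0)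
    (hdist : ∀ V₁ V₂ : Submodule F V, IsCompl V₁ V₂ →
      (∀ w ∈ V₁, x w ∈ V₁) → (∀ w ∈ V₂, x w ∈ V₂) →
      (V₁ = ⨆ d : ℤ, (V₁ ⊓ Submodule.span F
        {w : V | ∃ p : Σ i : Fin k, Fin (α i + β i),
          w = b p ∧ (α p.1 : ℤ) - ((p.2 : ℕ) + 1) = d})) →
      (V₂ = ⨆ d : ℤ, (V₂ ⊓ Submodule.span F
        {w : V | ∃ p : Σ i : Fin k, Fin (α i + β i),
          w = b p ∧ (α p.1 : ℤ) - ((p.2 : ℕ) + 1) = d})) →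
      v ∈ V₁ →
      V₁ = ⊥ ∨ V₂ = ⊥) :
    (k = 1 ∧ α 0 = 0)
    ∨ ((∀ i : ℕ, i + 1 < k → α (i + 1) < α i ∧ β (i + 1) < β i) ∧ 0 < α (k - 1)) := by
  subst hv
  have hb : IsJordanBasis x b := hx
  have hd : IsDistinguished x (basisGrading b (rowDegree fun i : Fin k => α i))
      (∑ i, alphaVec b i) := hdist
  by_contra hcl
  obtain ⟨r, s, hrs, hs | ⟨hαrs, hβrs⟩⟩ := exists_rows_of_not_classified hk hα hβ hcl
  · exact hb.not_isDistinguished_of_alpha_eq_zero hrow hrs hs hd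
  · exact hb.not_isDistinguished_of_le hrow hrs hαrs hβrs hd
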